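/- arXiv:1212.0836 — 2 statements merged into one kernel-verified Lean document; each statement's English description precedes it below -/
import Mathlib

section
/- Let a_m be the number of strings of length m over a three-letter alphabet {1,2,3} that contain none of the factors 13, 1223, 1232 as contiguous substrings. Then for all m ≥ 4, a_m = 3a_{m−1} − a_{m−2} − 2a_{m−4}. -/
namespace AvoidAux

inductive St : Type
  | e | s1 | s12 | s122 | s123 | dead
  deriving DecidableEq

instance : Fintype St :=
  ⟨{.e, .s1, .s12, .s122, .s123, .dead}, by intro x; cases x <;> decide⟩

def step (s : St) (x : Fin 3) : St :=
  match s, x.val with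
  | .dead, _ => .dead
  | .e, 0 => .s1
  | .e, _ => .e
  | .s1, 0 => .s1
  | .s1, 1 => .s12
  | .s1, _ => .dead
  | .s12, 0 => .s1
  | .s12, 1 => .s122
  | .s12, _ => .s123
  | .s122, 0 => .s1
  | .s122, 1 => .e
  | .s122, _ => .dead
  | .s123, 0 => .s1
  | .s123, 1 => .dead
  | .s123, _ => .e

def run (w : List (Fin 3)) : St := w.foldl step .e

lemma run_concat (w : List (Fin 3)) (x : Fin 3) : run (w ++ [x]) = step (run w) x := by
  simp [run, List.foldl_append]

def Bad (w : List (Fin 3)) : Prop :=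
  [0, 2] <:+: w ∨ [0, 1, 1, 2] <:+: w ∨ [0, 1, 2, 1] <:+: w

lemma suffix_snoc_iff {α : Type*} {l : List α} {b x : α} {w : List α} :
    l ++ [b] <:+ w ++ [x] ↔ b = x ∧ l <:+ w := by
  constructor
  · rintro ⟨t, h⟩
    rw [← List.append_assoc] at h
    have h1 : b = x := by
      have := congrArg List.getLast? h
      simpa using this
    subst h1
    have h2 : t ++ l = w := by
      have := congrArg List.dropLast h
      simpa using this
    exact ⟨rfl, t, h2⟩
  · rintro ⟨rfl, t, rfl⟩
    exact ⟨t, by simp⟩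

lemma single_suffix_snoc_iff {α : Type*} {b x : α} {w : List α} :
    [b] <:+ w ++ [x] ↔ b = x := by
  simpa using (suffix_snoc_iff (l := []) (b := b) (x := x) (w := w))

lemma not_suffix_both {α : Type*} {l1 l2 w : List α} (h : ¬ l1 <:+ l2) (h' : ¬ l2 <:+ l1) :
    ¬ (l1 <:+ w ∧ l2 <:+ w) := fun ⟨a, b⟩ => (List.suffix_or_suffix_of_suffix a b).elim h h'

lemma suffix2 {α : Type*} {a b x : α} {w : List α} :
    [a, b] <:+ w ++ [x] ↔ b = x ∧ [a] <:+ w := suffix_snoc_iff (l := [a])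

lemma suffix3 {α : Type*} {a b c x : α} {w : List α} :
    [a, b, c] <:+ w ++ [x] ↔ c = x ∧ [a, b] <:+ w := suffix_snoc_iff (l := [a, b])

lemma suffix4 {α : Type*} {a b c d x : α} {w : List α} :
    [a, b, c, d] <:+ w ++ [x] ↔ d = x ∧ [a, b, c] <:+ w := suffix_snoc_iff (l := [a, b, c])

set_option maxHeartbeats 1000000 in
lemma run_spec (w : List (Fin 3)) :
    (run w = .dead ↔ Bad w) ∧
    (run w = .s1 ↔ ¬ Bad w ∧ [0] <:+ w) ∧
    (run w = .s12 ↔ ¬ Bad w ∧ [0, 1] <:+ w) ∧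
    (run w = .s122 ↔ ¬ Bad w ∧ [0, 1, 1] <:+ w) ∧
    (run w = .s123 ↔ ¬ Bad w ∧ [0, 1, 2] <:+ w) := by
  induction w using List.reverseRecOn with
  | nil => simp [run, Bad]
  | append_singleton w x ih =>
    obtain ⟨i1, i2, i3, i4, i5⟩ := ih
    have E1 := not_suffix_both (w := w) (l1 := [0]) (l2 := [0, 1]) (by decide) (by decide)
    have E2 := not_suffix_both (w := w) (l1 := [0]) (l2 := [0, 1, 1]) (by decide) (by decide)
    have E3 := not_suffix_both (w := w) (l1 := [0]) (l2 := [0, 1, 2]) (by decide) (by decide)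
    have E4 := not_suffix_both (w := w) (l1 := [0, 1]) (l2 := [0, 1, 1]) (by decide) (by decide)
    have E5 := not_suffix_both (w := w) (l1 := [0, 1]) (l2 := [0, 1, 2]) (by decide) (by decide)
    have E6 := not_suffix_both (w := w) (l1 := [0, 1, 1]) (l2 := [0, 1, 2]) (by decide) (by decide)
    rw [run_concat]
    have hx : x = 0 ∨ x = 1 ∨ x = 2 := by fin_cases x <;> simp
    rcases hx with rfl | rfl | rfl <;>
      cases h : run w <;>
      rw [h] at i1 i2 i3 i4 i5 <;>
      simp only [Bad, List.infix_concat_iff, suffix2, suffix3, suffix4,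
        single_suffix_snoc_iff] at i1 i2 i3 i4 i5 ⊢ <;>
      simp only [step] <;>
      simp at i1 i2 i3 i4 i5 ⊢ <;>
      itauto

noncomputable def cnt (m : ℕ) (s : St) : ℕ :=
  (Finset.univ.filter fun f : Fin m → Fin 3 => run (List.ofFn f) = s).card

lemma run_ofFn_succ (m : ℕ) (f : Fin (m + 1) → Fin 3) :
    run (List.ofFn f) = step (run (List.ofFn (Fin.init f))) (f (Fin.last m)) := by
  rw [List.ofFn_succ', List.concat_eq_append, run_concat]
  rfl

lemma cnt_succ (m : ℕ) (s : St) :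
    cnt (m + 1) s = ∑ p : St × Fin 3, if step p.1 p.2 = s then cnt m p.1 else 0 := by
  classical
  rw [cnt, Finset.card_eq_sum_card_fiberwise
    (f := fun f : Fin (m + 1) → Fin 3 =>
      ((run (List.ofFn (Fin.init f)), f (Fin.last m)) : St × Fin 3))
    (t := Finset.univ) (fun x _ => Finset.mem_univ _)]
  apply Finset.sum_congr rfl
  rintro ⟨s', x⟩ -
  by_cases hst : step s' x = s
  · rw [if_pos hst, cnt]
    apply Finset.card_nbij' (i := fun f => Fin.init f) (j := fun g => Fin.snoc g x)
    · intro f hf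
      simp only [Finset.mem_coe, Finset.mem_filter, Finset.mem_univ, true_and] at hf ⊢
      exact (Prod.mk.injEq _ _ _ _ ▸ hf.2).1
    · intro g hg
      simp only [Finset.mem_coe, Finset.mem_filter, Finset.mem_univ, true_and] at hg ⊢
      constructor
      · rw [run_ofFn_succ, Fin.init_snoc, Fin.snoc_last, hg, hst]
      · rw [Fin.init_snoc, Fin.snoc_last, hg]
    · intro f hf
      simp only [Finset.mem_coe, Finset.mem_filter, Finset.mem_univ, true_and] at hf
      have : f (Fin.last m) = x := (Prod.mk.injEq _ _ _ _ ▸ hf.2).2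
      rw [← this]
      exact Fin.snoc_init_self f
    · intro g _
      exact Fin.init_snoc (α := fun _ => Fin 3) x g
  · rw [if_neg hst, Finset.card_eq_zero, Finset.eq_empty_iff_forall_notMem]
    intro f hf
    simp only [Finset.mem_filter, Finset.mem_univ, true_and] at hf
    obtain ⟨h1, h2⟩ := hf
    rw [run_ofFn_succ] at h1
    obtain ⟨e1, e2⟩ := Prod.mk.injEq _ _ _ _ ▸ h2
    rw [e1, e2] at h1
    exact hst h1

lemma sum_St {M : Type*} [AddCommMonoid M] (f : St → M) :
    ∑ s : St, f s = f .e + f .s1 + f .s12 + f .s122 + f .s123 + f .dead := by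
  have h : (Finset.univ : Finset St) = {.e, .s1, .s12, .s122, .s123, .dead} := by decide
  rw [h, Finset.sum_insert (by decide), Finset.sum_insert (by decide),
    Finset.sum_insert (by decide), Finset.sum_insert (by decide),
    Finset.sum_insert (by decide), Finset.sum_singleton, add_assoc, add_assoc, add_assoc,
    add_assoc]

lemma cnt_e (m : ℕ) :
    cnt (m + 1) .e = 2 * cnt m .e + cnt m .s122 + cnt m .s123 := by
  rw [cnt_succ, Fintype.sum_prod_type, sum_St]
  simp [Fin.sum_univ_three, step]
  omega

lemma cnt_s1 (m : ℕ) :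
    cnt (m + 1) .s1 = cnt m .e + cnt m .s1 + cnt m .s12 + cnt m .s122 + cnt m .s123 := by
  rw [cnt_succ, Fintype.sum_prod_type, sum_St]
  simp [Fin.sum_univ_three, step]

lemma cnt_s12 (m : ℕ) : cnt (m + 1) .s12 = cnt m .s1 := by
  rw [cnt_succ, Fintype.sum_prod_type, sum_St]
  simp [Fin.sum_univ_three, step]

lemma cnt_s122 (m : ℕ) : cnt (m + 1) .s122 = cnt m .s12 := by
  rw [cnt_succ, Fintype.sum_prod_type, sum_St]
  simp [Fin.sum_univ_three, step]

lemma cnt_s123 (m : ℕ) : cnt (m + 1) .s123 = cnt m .s12 := by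
  rw [cnt_succ, Fintype.sum_prod_type, sum_St]
  simp [Fin.sum_univ_three, step]

lemma g_inj : Function.Injective (fun x : Fin 3 => (x : ℕ) + 1) := by
  intro a b h
  simp only at h
  exact Fin.ext (by omega)

lemma map_plus_one (l : List (Fin 3)) :
    l.map (fun x => (x : ℕ) + 1) = List.map (fun x : Fin 3 => (x : ℕ) + 1) l := by
  induction l with
  | nil => rfl
  | cons a l ih => simpa using ih

lemma infix_map (p w : List (Fin 3)) :
    List.map (fun x : Fin 3 => (x : ℕ) + 1) p <:+: List.map (fun x : Fin 3 => (x : ℕ) + 1) w ↔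
      p <:+: w := by
  constructor
  · intro h
    rw [List.infix_map_iff (f := fun x : Fin 3 => (x : ℕ) + 1) (l₁ := w)] at h
    obtain ⟨l, hl, he⟩ := h
    have : p = l := List.map_injective_iff.2 g_inj he
    rwa [this]
  · exact fun h => h.map _

end AvoidAux

/-- `a_m`: the number of strings of length `m` over the alphabet `{1, 2, 3}` containing
none of the factors `13`, `1223`, `1232` (strings of length `m` encoded as functions
`Fin m → Fin 3`, read as words over `{1, 2, 3}` via `x ↦ x + 1`). -/
def avoidCount (m : ℕ) : ℕ :=
  (Finset.univ.filter fun f : Fin m → Fin 3 =>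
    ¬ [1, 3] <:+: (List.ofFn f).map (fun x => (x : ℕ) + 1) ∧
    ¬ [1, 2, 2, 3] <:+: (List.ofFn f).map (fun x => (x : ℕ) + 1) ∧
    ¬ [1, 2, 3, 2] <:+: (List.ofFn f).map (fun x => (x : ℕ) + 1)).card

namespace AvoidAux

lemma avoidCount_eq (m : ℕ) :
    avoidCount m = cnt m .e + cnt m .s1 + cnt m .s12 + cnt m .s122 + cnt m .s123 := by
  classical
  have h1 : (Finset.univ.filter fun f : Fin m → Fin 3 =>
      ¬ [1, 3] <:+: (List.ofFn f).map (fun x => (x : ℕ) + 1) ∧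
      ¬ [1, 2, 2, 3] <:+: (List.ofFn f).map (fun x => (x : ℕ) + 1) ∧
      ¬ [1, 2, 3, 2] <:+: (List.ofFn f).map (fun x => (x : ℕ) + 1)) =
      Finset.univ.filter fun f : Fin m → Fin 3 => run (List.ofFn f) ≠ .dead := by
    apply Finset.filter_congr
    intro f _
    rw [map_plus_one]
    rw [show ([1, 3] : List ℕ) = List.map (fun x : Fin 3 => (x : ℕ) + 1) [0, 2] from rfl,
      show ([1, 2, 2, 3] : List ℕ) = List.map (fun x : Fin 3 => (x : ℕ) + 1) [0, 1, 1, 2] from rfl,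
      show ([1, 2, 3, 2] : List ℕ) = List.map (fun x : Fin 3 => (x : ℕ) + 1) [0, 1, 2, 1] from rfl,
      infix_map, infix_map, infix_map]
    have hs := (run_spec (List.ofFn f)).1
    simp only [Bad] at hs
    constructor
    · intro hc h
      rw [hs] at h
      tauto
    · intro h
      rw [ne_eq, hs] at h
      tauto
  rw [avoidCount, h1, Finset.card_eq_sum_card_fiberwise
    (f := fun f : Fin m → Fin 3 => run (List.ofFn f))
    (t := ({.e, .s1, .s12, .s122, .s123} : Finset St)) ?_]
  · rw [Finset.sum_insert (by decide), Finset.sum_insert (by decide),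
      Finset.sum_insert (by decide), Finset.sum_insert (by decide), Finset.sum_singleton]
    have key : ∀ s : St, s ≠ .dead →
        ((Finset.univ.filter fun f : Fin m → Fin 3 => run (List.ofFn f) ≠ .dead).filter
          (fun f => run (List.ofFn f) = s)) =
        Finset.univ.filter fun f : Fin m → Fin 3 => run (List.ofFn f) = s := by
      intro s hs
      rw [Finset.filter_filter]
      apply Finset.filter_congr
      intro f _
      constructor
      · exact fun h => h.2
      · exact fun h => ⟨h ▸ hs, h⟩
    rw [key _ (by decide), key _ (by decide), key _ (by decide), key _ (by decide),
      key _ (by decide)]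
    simp only [cnt, Finset.filter_congr_decidable, add_assoc]
  · intro f hf
    simp only [Finset.mem_coe, Finset.mem_filter, Finset.mem_univ, true_and] at hf
    cases h : run (List.ofFn f) <;> simp_all

end AvoidAux

/-- For all `m ≥ 4`, `a_m = 3a_{m−1} − a_{m−2} − 2a_{m−4}`. -/
theorem avoidCount_recurrence (m : ℕ) (hm : 4 ≤ m) :
    (avoidCount m : ℤ) =
      3 * avoidCount (m - 1) - avoidCount (m - 2) - 2 * avoidCount (m - 4) := by
  open AvoidAux in
  obtain ⟨k, rfl⟩ : ∃ k, m = k + 4 := ⟨m - 4, by omega⟩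
  have h0 := avoidCount_eq k
  have h1 := avoidCount_eq (k + 1)
  have h2 := avoidCount_eq (k + 2)
  have h3 := avoidCount_eq (k + 3)
  have h4 := avoidCount_eq (k + 4)
  have e1 := cnt_e k; have e2 := cnt_s1 k; have e3 := cnt_s12 k
  have e4 := cnt_s122 k; have e5 := cnt_s123 k
  have f1 : cnt (k + 2) St.e = 2 * cnt (k + 1) St.e + cnt (k + 1) St.s122 + cnt (k + 1) St.s123 :=
    cnt_e (k + 1)
  have f2 : cnt (k + 2) St.s1 = cnt (k + 1) St.e + cnt (k + 1) St.s1 + cnt (k + 1) St.s12 +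
      cnt (k + 1) St.s122 + cnt (k + 1) St.s123 := cnt_s1 (k + 1)
  have f3 : cnt (k + 2) St.s12 = cnt (k + 1) St.s1 := cnt_s12 (k + 1)
  have f4 : cnt (k + 2) St.s122 = cnt (k + 1) St.s12 := cnt_s122 (k + 1)
  have f5 : cnt (k + 2) St.s123 = cnt (k + 1) St.s12 := cnt_s123 (k + 1)
  have g1 : cnt (k + 3) St.e = 2 * cnt (k + 2) St.e + cnt (k + 2) St.s122 + cnt (k + 2) St.s123 :=
    cnt_e (k + 2)
  have g2 : cnt (k + 3) St.s1 = cnt (k + 2) St.e + cnt (k + 2) St.s1 + cnt (k + 2) St.s12 +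
      cnt (k + 2) St.s122 + cnt (k + 2) St.s123 := cnt_s1 (k + 2)
  have g3 : cnt (k + 3) St.s12 = cnt (k + 2) St.s1 := cnt_s12 (k + 2)
  have g4 : cnt (k + 3) St.s122 = cnt (k + 2) St.s12 := cnt_s122 (k + 2)
  have g5 : cnt (k + 3) St.s123 = cnt (k + 2) St.s12 := cnt_s123 (k + 2)
  have j1 : cnt (k + 4) St.e = 2 * cnt (k + 3) St.e + cnt (k + 3) St.s122 + cnt (k + 3) St.s123 :=
    cnt_e (k + 3)
  have j2 : cnt (k + 4) St.s1 = cnt (k + 3) St.e + cnt (k + 3) St.s1 + cnt (k + 3) St.s12 +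
      cnt (k + 3) St.s122 + cnt (k + 3) St.s123 := cnt_s1 (k + 3)
  have j3 : cnt (k + 4) St.s12 = cnt (k + 3) St.s1 := cnt_s12 (k + 3)
  have j4 : cnt (k + 4) St.s122 = cnt (k + 3) St.s12 := cnt_s122 (k + 3)
  have j5 : cnt (k + 4) St.s123 = cnt (k + 3) St.s12 := cnt_s123 (k + 3)
  have hk1 : k + 4 - 1 = k + 3 := by omega
  have hk2 : k + 4 - 2 = k + 2 := by omega
  have hk4 : k + 4 - 4 = k := by omega
  rw [hk1, hk2, hk4]
  have hshift : ∀ n : ℕ, n + 1 + 1 = n + 2 := fun n => rfl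
  omega
end

section
/- There exists a constant C > 0 such that for all n ≥ 0, the number |P(n,2)| of permutations of n elements generated by 2 stacks in series satisfies |P(n,2)| ≤ C · 14.864^n. -/
/-- A configuration ("state") of a system of `k` stacks in series: container `0`
is the input queue (front at the head of the list), containers `1, …, k` are the
stacks (top at the head), and container `k+1` is the output queue (front at the head). -/
abbrev Conf (k : ℕ) : Type := Fin (k + 2) → List ℕ

/-- Apply the move `m_{i+1}` (for `i : Fin (k+1)`): remove the element at the head of
container `i` and move it to container `i+1` (pushed on top if the destination is a
stack, appended at the back if it is the output queue).  Returns `none` (the illegal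
state `∅`) if the source container is empty. -/
def applyMove {k : ℕ} (i : Fin (k + 1)) (s : Conf k) : Option (Conf k) :=
  match s i.castSucc with
  | [] => none
  | x :: rest =>
      some fun j =>
        if j = i.castSucc then rest
        else if j = i.succ then
          (if (j : ℕ) = k + 1 then s j ++ [x] else x :: s j)
        else s j

/-- The action `w ∗ s` of a string of moves on an (optional) state; moves are applied
left to right, and the illegal state `none` is absorbing. -/
def act {k : ℕ} (w : List (Fin (k + 1))) (s : Option (Conf k)) : Option (Conf k) :=
  w.foldl (fun t i => t.bind (applyMove i)) s

/-- The initial state `I(n,k)`: the input queue holds `1, …, n` (front to back),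
and everything else is empty. -/
def initConf (n k : ℕ) : Conf k :=
  fun j => if (j : ℕ) = 0 then List.range' 1 n else []

/-- The final state whose output queue holds `out` (front to back), all else empty. -/
def finalConf (k : ℕ) (out : List ℕ) : Conf k :=
  fun j => if (j : ℕ) = k + 1 then out else []

/-- `π ∈ Sₙ` is generated by `k` stacks in series if some string of moves takes
`I(n,k)` to the final state with output queue `π(1), …, π(n)` (front to back). -/
def Generates (n k : ℕ) (π : Equiv.Perm (Fin n)) : Prop :=
  ∃ w : List (Fin (k + 1)),
    act w (some (initConf n k)) = some (finalConf k (List.ofFn fun j => (π j : ℕ) + 1))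

/-- `P(n,k)`, the set of permutations of `n` elements generated by `k` stacks in series. -/
def GenPerms (n k : ℕ) : Set (Equiv.Perm (Fin n)) := {π | Generates n k π}

/-- `k_n`, the least number of stacks needed to generate (equivalently, sort) every
permutation of `n` elements. -/
noncomputable def kStacks (n : ℕ) : ℕ := sInf {k | ∀ π : Equiv.Perm (Fin n), Generates n k π}

/-- Two move strings are equivalent, `u ∼ v`, if they act identically on every state. -/
def MoveEquiv {k : ℕ} (u v : List (Fin (k + 1))) : Prop :=
  ∀ s : Conf k, act u (some s) = act v (some s)

-- ===== auxiliary development =====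

lemma act_cons {k} (i : Fin (k+1)) (w) (s : Option (Conf k)) :
    act (i :: w) s = act w (s.bind (applyMove i)) := rfl
lemma act_none {k} (w : List (Fin (k+1))) : act w none = none := by
  induction w with
  | nil => rfl
  | cons i w ih => rw [act_cons]; exact ih
lemma act_append {k} (u v : List (Fin (k+1))) (s : Option (Conf k)) :
    act (u ++ v) s = act v (act u s) := by
  simp [act, List.foldl_append]
lemma applyMove_nil {k} (i : Fin (k+1)) (s : Conf k) (h : s i.castSucc = []) :
    applyMove i s = none := by unfold applyMove; rw [h]
lemma applyMove_cons {k} (i : Fin (k+1)) (s : Conf k) (x rest) (h : s i.castSucc = x :: rest) :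
    applyMove i s = some fun j =>
        if j = i.castSucc then rest
        else if j = i.succ then
          (if (j : ℕ) = k + 1 then s j ++ [x] else x :: s j)
        else s j := by unfold applyMove; rw [h]

lemma equiv_ca (s : Conf 2) : act [2,0] (some s) = act [0,2] (some s) := by
  rcases h2 : s 2 with _ | ⟨y, r2⟩ <;> rcases h0 : s 0 with _ | ⟨x, r0⟩ <;>
    simp only [act, List.foldl_cons, List.foldl_nil, Option.bind_some]
  · rw [applyMove_nil 2 s h2, applyMove_nil 0 s h0]; rfl
  · rw [applyMove_nil 2 s h2, applyMove_cons 0 s x r0 h0]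
    simp only [Option.bind_none, Option.bind_some]
    rw [applyMove_nil 2 _ (by simpa using h2)]
  · rw [applyMove_nil 0 s h0, applyMove_cons 2 s y r2 h2]
    simp only [Option.bind_none, Option.bind_some]
    rw [applyMove_nil 0 _ (by simpa using h0)]
  · rw [applyMove_cons 2 s y r2 h2, applyMove_cons 0 s x r0 h0]
    simp only [Option.bind_some]
    rw [applyMove_cons 0 _ x r0 (by simpa using h0),
        applyMove_cons 2 _ y r2 (by simpa using h2)]
    congr 1; funext j; fin_cases j <;> simp <;> rfl

lemma cs0 : Fin.castSucc (0:Fin 3) = (0:Fin 4) := rfl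
lemma cs1 : Fin.castSucc (1:Fin 3) = (1:Fin 4) := rfl
lemma cs2 : Fin.castSucc (2:Fin 3) = (2:Fin 4) := rfl
lemma sc0 : Fin.succ (0:Fin 3) = (1:Fin 4) := rfl
lemma sc1 : Fin.succ (1:Fin 3) = (2:Fin 4) := rfl
lemma sc2 : Fin.succ (2:Fin 3) = (3:Fin 4) := rfl

lemma equiv_bacb (s : Conf 2) : act [1,0,2,1] (some s) = act [0,1,1,2] (some s) := by
  rcases h1 : s 1 with _ | ⟨y, r1⟩ <;> rcases h0 : s 0 with _ | ⟨x, r0⟩ <;>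
      simp [act, applyMove, h0, h1, cs0, cs1, cs2, sc0, sc1, sc2] <;>
    (try (funext j; fin_cases j <;> simp))

lemma equiv_babc (s : Conf 2) : act [1,0,1,2] (some s) = act [0,1,2,1] (some s) := by
  rcases h1 : s 1 with _ | ⟨y, r1⟩ <;> rcases h0 : s 0 with _ | ⟨x, r0⟩ <;>
      simp [act, applyMove, h0, h1, cs0, cs1, cs2, sc0, sc1, sc2] <;>
    (try (funext j; fin_cases j <;> simp))

lemma equiv_ca' (s : Conf 2) : act [2,0] (some s) = act [0,2] (some s) := by
  rcases h2 : s 2 with _ | ⟨y, r2⟩ <;> rcases h0 : s 0 with _ | ⟨x, r0⟩ <;>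
      simp [act, applyMove, h0, h2, cs0, cs1, cs2, sc0, sc1, sc2] <;>
    (try (funext j; fin_cases j <;> simp))



-- val3 : big-endian base-3 value
def val3 : List (Fin 3) → ℕ
  | [] => 0
  | i :: w => (i : ℕ) * 3 ^ w.length + val3 w

lemma val3_append (u v : List (Fin 3)) :
    val3 (u ++ v) = val3 u * 3 ^ v.length + val3 v := by
  induction u with
  | nil => simp [val3]
  | cons i u ih =>
      simp only [List.cons_append, val3]
      rw [List.length_append, pow_add, ih]
      ring

lemma val3_ctx {u v f g : List (Fin 3)} (hlen : f.length = g.length)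
    (hval : val3 g < val3 f) : val3 (u ++ g ++ v) < val3 (u ++ f ++ v) := by
  rw [val3_append, val3_append, val3_append, val3_append, hlen]
  have hp : 0 < 3 ^ v.length := by positivity
  have h1 : val3 u * 3 ^ g.length + val3 g < val3 u * 3 ^ g.length + val3 f := by omega
  exact Nat.add_lt_add_right (mul_lt_mul_of_pos_right h1 hp) _

-- automaton
def delta : Fin 6 → Fin 3 → Option (Fin 6) := fun s c =>
  match (s : ℕ), (c : ℕ) with
  | 0, 0 => some 0 | 0, 1 => some 1 | 0, 2 => some 5
  | 1, 0 => some 2 | 1, 1 => some 1 | 1, 2 => some 5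
  | 2, 0 => some 0 | 2, 1 => some 4 | 2, 2 => some 3
  | 3, 0 => none   | 3, 1 => none   | 3, 2 => some 5
  | 4, 0 => some 2 | 4, 1 => some 1 | 4, 2 => none
  | 5, 0 => none   | 5, 1 => some 1 | _, _ => some 5

def run3 : Fin 6 → List (Fin 3) → Option (Fin 6)
  | s, [] => some s
  | s, c :: w => match delta s c with
    | none => none
    | some t => run3 t w

lemma run3_append (u v : List (Fin 3)) (s : Fin 6) :
    run3 s (u ++ v) = (run3 s u).bind (fun t => run3 t v) := by
  induction u generalizing s with
  | nil => simp [run3]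
  | cons c u ih =>
      simp only [List.cons_append, run3]
      cases delta s c with
      | none => rfl
      | some t => exact ih t

def need : Fin 6 → List (Fin 3) := fun s =>
  match (s : ℕ) with
  | 0 => [] | 1 => [1] | 2 => [1,0] | 3 => [1,0,2] | 4 => [1,0,1] | _ => [2]

lemma run3_suffix (w : List (Fin 3)) : ∀ s : Fin 6, run3 0 w = some s → ∃ r, w = r ++ need s := by
  induction w using List.reverseRecOn with
  | nil =>
      intro s hs
      simp only [run3] at hs
      obtain rfl : (0 : Fin 6) = s := Option.some.inj hs
      exact ⟨[], by simp [need]⟩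
  | append_singleton u c ih =>
      intro s hs
      rw [run3_append] at hs
      rcases ht : run3 0 u with _ | t
      · rw [ht] at hs; simp at hs
      · rw [ht] at hs
        simp only [Option.bind_some, run3] at hs
        rcases hd : delta t c with _ | s'
        · rw [hd] at hs; simp at hs
        · rw [hd] at hs
          obtain rfl : s' = s := by
            simp only [run3] at hs; exact Option.some.inj hs
          obtain ⟨r, rfl⟩ := ih t ht
          fin_cases t <;> fin_cases c
          · obtain rfl := Option.some.inj hd; exact ⟨r ++ [0], by simp [need]⟩
          · obtain rfl := Option.some.inj hd; exact ⟨r, by simp [need]⟩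
          · obtain rfl := Option.some.inj hd; exact ⟨r, by simp [need]⟩
          · obtain rfl := Option.some.inj hd; exact ⟨r, by simp [need]⟩
          · obtain rfl := Option.some.inj hd; exact ⟨r ++ [1], by simp [need]⟩
          · obtain rfl := Option.some.inj hd; exact ⟨r ++ [1], by simp [need]⟩
          · obtain rfl := Option.some.inj hd; exact ⟨r ++ [1,0,0], by simp [need]⟩
          · obtain rfl := Option.some.inj hd; exact ⟨r, by simp [need]⟩
          · obtain rfl := Option.some.inj hd; exact ⟨r, by simp [need]⟩
          · simp [delta] at hd
          · simp [delta] at hd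
          · obtain rfl := Option.some.inj hd; exact ⟨r ++ [1,0,2], by simp [need]⟩
          · obtain rfl := Option.some.inj hd; exact ⟨r ++ [1,0], by simp [need]⟩
          · obtain rfl := Option.some.inj hd; exact ⟨r ++ [1,0,1], by simp [need]⟩
          · simp [delta] at hd
          · simp [delta] at hd
          · obtain rfl := Option.some.inj hd; exact ⟨r ++ [2], by simp [need]⟩
          · obtain rfl := Option.some.inj hd; exact ⟨r ++ [2], by simp [need]⟩


lemma act_context {f g : List (Fin 3)} (hfg : ∀ s : Conf 2, act f (some s) = act g (some s))
    (u v : List (Fin 3)) (s : Conf 2) :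
    act (u ++ f ++ v) (some s) = act (u ++ g ++ v) (some s) := by
  rw [act_append, act_append, act_append, act_append]
  rcases h : act u (some s) with _ | s'
  · simp [act_none]
  · rw [hfg s']

lemma run3_none_split : ∀ (w : List (Fin 3)) (s : Fin 6), run3 s w = none →
    ∃ p c rest t, w = p ++ c :: rest ∧ run3 s p = some t ∧ delta t c = none := by
  intro w
  induction w with
  | nil => intro s hs; simp [run3] at hs
  | cons c w ih =>
      intro s hs
      rcases hd : delta s c with _ | t
      · exact ⟨[], c, w, s, rfl, rfl, hd⟩
      · have hw : run3 t w = none := by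
          simp only [run3] at hs; rw [hd] at hs; exact hs
        obtain ⟨p, c', rest, t', h1, h2, h3⟩ := ih t hw
        refine ⟨c :: p, c', rest, t', by simp [h1], ?_, h3⟩
        simp only [run3]; rw [hd]; exact h2

lemma val3_ca : val3 [0,2] < val3 [2,0] := by decide
lemma val3_bacb : val3 [0,1,1,2] < val3 [1,0,2,1] := by decide
lemma val3_babc : val3 [0,1,2,1] < val3 [1,0,1,2] := by decide

lemma reject_rewrite (w : List (Fin 3)) (hw : run3 0 w = none) :
    ∃ w', val3 w' < val3 w ∧ ∀ s : Conf 2, act w' (some s) = act w (some s) := by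
  obtain ⟨p, c, rest, t, rfl, hp, hd⟩ := run3_none_split w 0 hw
  obtain ⟨r, rfl⟩ := run3_suffix p t hp
  fin_cases t <;> fin_cases c
  · simp [delta] at hd
  · simp [delta] at hd
  · simp [delta] at hd
  · simp [delta] at hd
  · simp [delta] at hd
  · simp [delta] at hd
  · simp [delta] at hd
  · simp [delta] at hd
  · simp [delta] at hd
  · refine ⟨(r ++ [1,0]) ++ [0,2] ++ rest, ?_, ?_⟩
    · have h := val3_ctx (u := r ++ [1,0]) (v := rest) (f := [2,0]) (g := [0,2]) rfl val3_ca
      calc val3 ((r ++ [1,0]) ++ [0,2] ++ rest) < val3 ((r ++ [1,0]) ++ [2,0] ++ rest) := h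
        _ = val3 (r ++ need 3 ++ 0 :: rest) := by norm_num [need]
    · intro s
      have h := act_context equiv_ca' (r ++ [1,0]) rest s
      calc act ((r ++ [1,0]) ++ [0,2] ++ rest) (some s)
          = act ((r ++ [1,0]) ++ [2,0] ++ rest) (some s) := h.symm
        _ = act (r ++ need 3 ++ 0 :: rest) (some s) := by norm_num [need]
  · refine ⟨r ++ [0,1,1,2] ++ rest, ?_, ?_⟩
    · have h := val3_ctx (u := r) (v := rest) (f := [1,0,2,1]) (g := [0,1,1,2]) rfl val3_bacb
      calc val3 (r ++ [0,1,1,2] ++ rest) < val3 (r ++ [1,0,2,1] ++ rest) := h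
        _ = val3 (r ++ need 3 ++ 1 :: rest) := by norm_num [need]
    · intro s
      have h := act_context equiv_bacb r rest s
      calc act (r ++ [0,1,1,2] ++ rest) (some s)
          = act (r ++ [1,0,2,1] ++ rest) (some s) := h.symm
        _ = act (r ++ need 3 ++ 1 :: rest) (some s) := by norm_num [need]
  · simp [delta] at hd
  · simp [delta] at hd
  · simp [delta] at hd
  · refine ⟨r ++ [0,1,2,1] ++ rest, ?_, ?_⟩
    · have h := val3_ctx (u := r) (v := rest) (f := [1,0,1,2]) (g := [0,1,2,1]) rfl val3_babc
      calc val3 (r ++ [0,1,2,1] ++ rest) < val3 (r ++ [1,0,1,2] ++ rest) := h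
        _ = val3 (r ++ need 4 ++ 2 :: rest) := by norm_num [need]
    · intro s
      have h := act_context equiv_babc r rest s
      calc act (r ++ [0,1,2,1] ++ rest) (some s)
          = act (r ++ [1,0,1,2] ++ rest) (some s) := h.symm
        _ = act (r ++ need 4 ++ 2 :: rest) (some s) := by norm_num [need]
  · refine ⟨r ++ [0,2] ++ rest, ?_, ?_⟩
    · have h := val3_ctx (u := r) (v := rest) (f := [2,0]) (g := [0,2]) rfl val3_ca
      calc val3 (r ++ [0,2] ++ rest) < val3 (r ++ [2,0] ++ rest) := h
        _ = val3 (r ++ need 5 ++ 0 :: rest) := by norm_num [need]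
    · intro s
      have h := act_context equiv_ca' r rest s
      calc act (r ++ [0,2] ++ rest) (some s)
          = act (r ++ [2,0] ++ rest) (some s) := h.symm
        _ = act (r ++ need 5 ++ 0 :: rest) (some s) := by norm_num [need]
  · simp [delta] at hd
  · simp [delta] at hd

lemma to_accepted : ∀ (N : ℕ) (w : List (Fin 3)), val3 w < N →
    ∃ w', run3 0 w' ≠ none ∧ ∀ s : Conf 2, act w' (some s) = act w (some s) := by
  intro N
  induction N with
  | zero => intro w h; exact absurd h (Nat.not_lt_zero _)
  | succ N ih =>
      intro w hw
      by_cases hr : run3 0 w = none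
      · obtain ⟨w2, hlt, heq⟩ := reject_rewrite w hr
        obtain ⟨w', h1, h2⟩ := ih w2 (by omega)
        exact ⟨w', h1, fun s => (h2 s).trans (heq s)⟩
      · exact ⟨w, hr, fun _ => rfl⟩

lemma fv1 : ((1:Fin 4):ℕ) = 1 := rfl
lemma fv2 : ((2:Fin 4):ℕ) = 2 := rfl
lemma fv3 : ((3:Fin 4):ℕ) = 3 := rfl

lemma act_lengths : ∀ (w : List (Fin 3)) (s t : Conf 2), act w (some s) = some t →
    ((t 0).length + w.count 0 = (s 0).length) ∧
    ((t 1).length + w.count 1 = (s 1).length + w.count 0) ∧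
    ((t 2).length + w.count 2 = (s 2).length + w.count 1) ∧
    ((t 3).length = (s 3).length + w.count 2) := by
  intro w
  induction w with
  | nil =>
      intro s t h
      obtain rfl : s = t := Option.some.inj h
      simp
  | cons i w ih =>
      intro s t h
      rw [act_cons, Option.bind_some] at h
      rcases hAM : applyMove i s with _ | s1
      · rw [hAM, act_none] at h; exact absurd h (by simp)
      · rw [hAM] at h
        have IH := ih s1 t h
        fin_cases i
        · rcases h0 : s 0 with _ | ⟨x, r⟩
          · rw [applyMove_nil _ s (by simpa using h0)] at hAM; exact absurd hAM (by simp)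
          · rw [applyMove_cons _ s x r (by simpa using h0)] at hAM
            obtain rfl := Option.some.inj hAM
            
            simp only [List.count_cons] at *
            simp_all [cs0, cs1, cs2, sc0, sc1, sc2, fv1, fv2, fv3, List.length_append]
            omega
        · rcases h1 : s 1 with _ | ⟨x, r⟩
          · rw [applyMove_nil _ s (by simpa using h1)] at hAM; exact absurd hAM (by simp)
          · rw [applyMove_cons _ s x r (by simpa using h1)] at hAM
            obtain rfl := Option.some.inj hAM
            
            simp only [List.count_cons] at *
            simp_all [cs0, cs1, cs2, sc0, sc1, sc2, fv1, fv2, fv3, List.length_append]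
            omega
        · rcases h2 : s 2 with _ | ⟨x, r⟩
          · rw [applyMove_nil _ s (by simpa using h2)] at hAM; exact absurd hAM (by simp)
          · rw [applyMove_cons _ s x r (by simpa using h2)] at hAM
            obtain rfl := Option.some.inj hAM
            
            simp only [List.count_cons] at *
            simp_all [cs0, cs1, cs2, sc0, sc1, sc2, fv1, fv2, fv3, List.length_append]
            omega

lemma length_eq_counts (w : List (Fin 3)) :
    w.length = w.count 0 + w.count 1 + w.count 2 := by
  induction w with
  | nil => simp
  | cons i w ih =>
      fin_cases i <;> simp [List.count_cons, ih] <;> omega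

/-- accepted-word Finsets of each length from each state -/
def AW : ℕ → Fin 6 → Finset (List (Fin 3))
  | 0, _ => {[]}
  | (L+1), s => Finset.univ.biUnion fun c =>
      (delta s c).elim ∅ fun t => (AW L t).image (c :: ·)

lemma mem_AW : ∀ (w : List (Fin 3)) (s : Fin 6), run3 s w ≠ none → w ∈ AW w.length s := by
  intro w
  induction w with
  | nil => intro s _; simp [AW]
  | cons c w ih =>
      intro s hs
      rcases hd : delta s c with _ | t
      · exfalso; apply hs; simp only [run3]; rw [hd]
      · have hw : run3 t w ≠ none := by
          intro hcon; apply hs; simp only [run3]; rw [hd]; exact hcon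
        have := ih t hw
        simp only [List.length_cons, AW]
        apply Finset.mem_biUnion.2
        exact ⟨c, Finset.mem_univ c, by rw [hd]; exact Finset.mem_image_of_mem _ this⟩

def xw : Fin 3 → ℚ := fun c =>
  match (c : ℕ) with
  | 1 => 1 | _ => 7/4

def wt : List (Fin 3) → ℚ
  | [] => 1
  | c :: w => xw c * wt w

def hvec : Fin 6 → ℚ := fun s =>
  match (s : ℕ) with
  | 0 => 1 | 1 => 903/1000 | 2 => 803/1000 | 3 => 1/4 | 4 => 653/1000 | _ => 101/200

lemma xw_nonneg (c : Fin 3) : 0 ≤ xw c := by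
  fin_cases c <;> norm_num [xw]

lemma wt_nonneg (w : List (Fin 3)) : 0 ≤ wt w := by
  induction w with
  | nil => norm_num [wt]
  | cons c w ih => rw [wt]; exact mul_nonneg (xw_nonneg c) ih

lemma wt_cons (c : Fin 3) (w : List (Fin 3)) : wt (c :: w) = xw c * wt w := rfl

lemma wt_counts : ∀ w : List (Fin 3), wt w = (7/4) ^ (w.count 0 + w.count 2) := by
  intro w
  induction w with
  | nil => simp [wt]
  | cons c w ih =>
      rw [wt_cons, ih]
      fin_cases c <;> simp [xw, List.count_cons] <;> ring

lemma hvec_pos (s : Fin 6) : 1/4 ≤ hvec s := by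
  fin_cases s <;> norm_num [hvec]

lemma cert (s : Fin 6) :
    (∑ c : Fin 3, xw c * (delta s c).elim 0 hvec) ≤ (709/200) * hvec s := by
  have e : ∀ s : Fin 6, (∑ c : Fin 3, xw c * (delta s c).elim 0 hvec)
      = xw 0 * (delta s 0).elim 0 hvec + xw 1 * (delta s 1).elim 0 hvec
        + xw 2 * (delta s 2).elim 0 hvec := fun s => Fin.sum_univ_three _
  rw [e]
  fin_cases s <;> norm_num [delta, xw, hvec]

lemma sum_wt_AW : ∀ (L : ℕ) (s : Fin 6), (∑ w ∈ AW L s, wt w) ≤ 4 * hvec s * (709/200) ^ L := by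
  intro L
  induction L with
  | zero =>
      intro s
      have := hvec_pos s
      simp [AW, wt]
      linarith
  | succ L ih =>
      intro s
      have hdisj : ∀ c₁ ∈ (Finset.univ : Finset (Fin 3)), ∀ c₂ ∈ Finset.univ, c₁ ≠ c₂ →
          Disjoint ((delta s c₁).elim ∅ fun t => (AW L t).image (c₁ :: ·))
                   ((delta s c₂).elim ∅ fun t => (AW L t).image (c₂ :: ·)) := by
        intro c₁ _ c₂ _ hne
        rw [Finset.disjoint_left]
        intro w hw1 hw2
        rcases h1 : delta s c₁ with _ | t₁ <;> rw [h1] at hw1 <;> simp at hw1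
        rcases h2 : delta s c₂ with _ | t₂ <;> rw [h2] at hw2 <;> simp at hw2
        obtain ⟨w1, _, rfl⟩ := hw1
        obtain ⟨w2, _, he⟩ := hw2
        exact hne (by injection he with h _; exact h.symm) 
      rw [AW, Finset.sum_biUnion hdisj]
      have hstep : ∀ c : Fin 3,
          (∑ w ∈ (delta s c).elim ∅ (fun t => (AW L t).image (c :: ·)), wt w)
            ≤ xw c * ((delta s c).elim 0 hvec * (4 * (709/200) ^ L)) := by
        intro c
        rcases hd : delta s c with _ | t
        · simp
        · simp only [Option.elim]
          rw [Finset.sum_image (by intro a _ b _ hab; injection hab)]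
          have : (∑ w ∈ AW L t, wt (c :: w)) = xw c * (∑ w ∈ AW L t, wt w) := by
            rw [Finset.mul_sum]; exact Finset.sum_congr rfl fun w _ => wt_cons c w
          rw [this]
          have hx : 0 ≤ xw c := xw_nonneg c
          have := ih t
          calc xw c * (∑ w ∈ AW L t, wt w) ≤ xw c * (4 * hvec t * (709/200) ^ L) :=
                mul_le_mul_of_nonneg_left (ih t) hx
            _ = xw c * (hvec t * (4 * (709/200) ^ L)) := by ring
      calc (∑ c : Fin 3, ∑ w ∈ (delta s c).elim ∅ (fun t => (AW L t).image (c :: ·)), wt w)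
          ≤ ∑ c : Fin 3, xw c * ((delta s c).elim 0 hvec * (4 * (709/200) ^ L)) :=
            Finset.sum_le_sum fun c _ => hstep c
        _ = (∑ c : Fin 3, xw c * (delta s c).elim 0 hvec) * (4 * (709/200) ^ L) := by
            rw [Finset.sum_mul]; exact Finset.sum_congr rfl fun c _ => by ring
        _ ≤ ((709/200) * hvec s) * (4 * (709/200) ^ L) := by
            have h4 : (0:ℚ) ≤ 4 * (709/200) ^ L := by positivity
            exact mul_le_mul_of_nonneg_right (cert s) h4
        _ = 4 * hvec s * (709/200) ^ (L + 1) := by rw [pow_succ]; ring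

/-- There is a constant `C > 0` with `|P(n,2)| ≤ C · 14.864ⁿ` for all `n`. -/
theorem card_genPerms_two_exponential_bound :
    ∃ C : ℝ, 0 < C ∧ ∀ n : ℕ, ((GenPerms n 2).ncard : ℝ) ≤ C * 14.864 ^ n := by
  refine ⟨4, by norm_num, fun n => ?_⟩
  classical
  -- canonical accepted word for each generated permutation
  have key : ∀ π : Equiv.Perm (Fin n), π ∈ GenPerms n 2 →
      ∃ w : List (Fin 3), run3 0 w ≠ none ∧
        act w (some (initConf n 2)) = some (finalConf 2 (List.ofFn fun j => (π j : ℕ) + 1)) := by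
    intro π hπ
    obtain ⟨w₀, hw₀⟩ := hπ
    obtain ⟨w, h1, h2⟩ := to_accepted (val3 w₀ + 1) w₀ (Nat.lt_succ_self _)
    exact ⟨w, h1, (h2 (initConf n 2)).trans hw₀⟩
  set f : Equiv.Perm (Fin n) → List (Fin 3) :=
    fun π => if h : π ∈ GenPerms n 2 then (key π h).choose else [] with hf
  have hfrun : ∀ π (h : π ∈ GenPerms n 2), run3 0 (f π) ≠ none := by
    intro π h; rw [hf]; simp only [dif_pos h]; exact (key π h).choose_spec.1
  have hfact : ∀ π (h : π ∈ GenPerms n 2),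
      act (f π) (some (initConf n 2)) =
        some (finalConf 2 (List.ofFn fun j => (π j : ℕ) + 1)) := by
    intro π h; rw [hf]; simp only [dif_pos h]; exact (key π h).choose_spec.2
  -- counts of letters in the canonical word
  have hcounts : ∀ π (h : π ∈ GenPerms n 2),
      (f π).count 0 = n ∧ (f π).count 1 = n ∧ (f π).count 2 = n := by
    intro π h
    have hc := act_lengths (f π) _ _ (hfact π h)
    have i0 : initConf n 2 0 = List.range' 1 n := rfl
    have i1 : initConf n 2 1 = [] := rfl
    have i2 : initConf n 2 2 = [] := rfl
    have i3 : initConf n 2 3 = [] := rfl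
    have g0 : finalConf 2 (List.ofFn fun j => ((π j : ℕ) + 1)) 0 = [] := rfl
    have g1 : finalConf 2 (List.ofFn fun j => ((π j : ℕ) + 1)) 1 = [] := rfl
    have g2 : finalConf 2 (List.ofFn fun j => ((π j : ℕ) + 1)) 2 = [] := rfl
    have g3 : finalConf 2 (List.ofFn fun j => ((π j : ℕ) + 1)) 3
        = List.ofFn fun j => ((π j : ℕ) + 1) := rfl
    rw [i0, i1, i2, i3, g0, g1, g2, g3] at hc
    simp only [List.length_nil, List.length_range', List.length_ofFn] at hc
    omega
  have hlen : ∀ π (h : π ∈ GenPerms n 2), (f π).length = 3 * n := by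
    intro π h
    obtain ⟨c0, c1, c2⟩ := hcounts π h
    rw [length_eq_counts, c0, c1, c2]; omega
  -- the finite set of permutations and its image
  have hfin : (GenPerms n 2).Finite := Set.toFinite _
  set Pfin := hfin.toFinset with hPfin
  set T := Finset.image f Pfin with hT
  have hinj : Set.InjOn f Pfin := by
    intro π₁ h₁ π₂ h₂ he
    have h₁ : π₁ ∈ GenPerms n 2 := by simpa [hPfin] using h₁
    have h₂ : π₂ ∈ GenPerms n 2 := by simpa [hPfin] using h₂
    have e1 := hfact π₁ h₁
    have e2 := hfact π₂ h₂
    rw [he] at e1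
    have e3 := Option.some.inj (e1.symm.trans e2)
    have e4 := congrFun e3 3
    have g3 : ∀ out, finalConf 2 out 3 = out := fun _ => rfl
    rw [g3, g3] at e4
    have e5 := List.ofFn_injective e4
    ext j
    have := congrFun e5 j
    simpa using this
  have hcard : Pfin.card = T.card := (Finset.card_image_of_injOn hinj).symm
  have hsub : T ⊆ AW (3 * n) 0 := by
    intro w hw
    rw [hT, Finset.mem_image] at hw
    obtain ⟨π, hπ, rfl⟩ := hw
    rw [hPfin, Set.Finite.mem_toFinset] at hπ
    have := mem_AW (f π) 0 (hfrun π hπ)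
    rwa [hlen π hπ] at this
  -- weight computation
  have hwt : ∀ w ∈ T, wt w = (7/4) ^ (2 * n) := by
    intro w hw
    rw [hT, Finset.mem_image] at hw
    obtain ⟨π, hπ, rfl⟩ := hw
    rw [hPfin, Set.Finite.mem_toFinset] at hπ
    obtain ⟨c0, _, c2⟩ := hcounts π hπ
    rw [wt_counts, c0, c2]
    congr 1
    omega
  have hsum : (T.card : ℚ) * (7/4) ^ (2 * n) ≤ 4 * (709/200) ^ (3 * n) := by
    have h1 : (∑ w ∈ T, wt w) = (T.card : ℚ) * (7/4) ^ (2 * n) := by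
      rw [Finset.sum_congr rfl hwt, Finset.sum_const, nsmul_eq_mul]
    have h2 : (∑ w ∈ T, wt w) ≤ ∑ w ∈ AW (3 * n) 0, wt w :=
      Finset.sum_le_sum_of_subset_of_nonneg hsub (fun w _ _ => wt_nonneg w)
    have h3 := sum_wt_AW (3 * n) 0
    have h4 : hvec 0 = 1 := rfl
    rw [h4] at h3
    calc (T.card : ℚ) * (7/4) ^ (2 * n) = ∑ w ∈ T, wt w := h1.symm
      _ ≤ ∑ w ∈ AW (3 * n) 0, wt w := h2
      _ ≤ 4 * 1 * (709/200) ^ (3 * n) := h3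
      _ = 4 * (709/200) ^ (3 * n) := by ring
  -- pass to the reals
  have hR : ((T.card : ℝ)) * (7/4) ^ (2 * n) ≤ 4 * (709/200) ^ (3 * n) := by
    have h' := (Rat.cast_le (K := ℝ)).mpr hsum
    push_cast at h'
    convert h' using 2 <;> norm_num
  have hpow : ((7:ℝ)/4) ^ (2 * n) = ((49:ℝ)/16) ^ n := by
    rw [pow_mul]; norm_num
  have hpow2 : ((709:ℝ)/200) ^ (3 * n) = (((709:ℝ)/200) ^ 3) ^ n := by rw [pow_mul]
  rw [hpow, hpow2] at hR
  have hap : (0:ℝ) < ((49:ℝ)/16) ^ n := by positivity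
  have hcardle : (T.card : ℝ) ≤ 4 * ((((709:ℝ)/200) ^ 3) / ((49:ℝ)/16)) ^ n := by
    rw [div_pow, ← mul_div_assoc]
    exact (le_div_iff₀ hap).2 hR
  have hbase : (((709:ℝ)/200) ^ 3) / ((49:ℝ)/16) ≤ 14.864 := by norm_num
  have hfinal : (T.card : ℝ) ≤ 4 * (14.864:ℝ) ^ n := by
    calc (T.card : ℝ) ≤ 4 * ((((709:ℝ)/200) ^ 3) / ((49:ℝ)/16)) ^ n := hcardle
      _ ≤ 4 * (14.864:ℝ) ^ n := by gcongr
  have hnc : (GenPerms n 2).ncard = T.card := by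
    rw [Set.ncard_eq_toFinset_card (GenPerms n 2) hfin]
    exact hcard
  rw [hnc]
  exact hfinal
end
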